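/- Let f be a non-zero vector of a metric vector space (V,Q) such that f ∉ V^⊥ and Q(f) ≠ 0. Then ΔO(V,Q,f) = ΔO'(V,Q,f) = {id_V, ξ_f}, and ξ_f ≠ id_V. -/

import Mathlib

/-! Setting: a field `F`, a finite-dimensional `F`-vector space `V`, a quadratic form
`Q : V → F` with polar form `B = QuadraticMap.polar Q` (the bilinear map `Q.polarBilin`),
induced map `D = Q.polarBilin : V →ₗ[F] Module.Dual F V`, and radical
`V^⊥ = LinearMap.ker Q.polarBilin`. -/

variable {F V : Type*} [Field F] [AddCommGroup V] [Module F V] [FiniteDimensional F V]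

/-- The map `δ_{c*,f} : x ↦ x + ⟨c*,x⟩ • f`. -/
def deltaMap (c : Module.Dual F V) (f : V) : V →ₗ[F] V :=
  LinearMap.id + c.smulRight f

/-- The orthogonal group `O(V,Q)`, as a set of linear endomorphisms. -/
def orthSet (Q : QuadraticForm F V) : Set (V →ₗ[F] V) :=
  {φ | Function.Bijective φ ∧ ∀ x, Q (φ x) = Q x}

/-- The weak orthogonal group `O'(V,Q)`: isometries fixing the radical elementwise. -/
def wOrthSet (Q : QuadraticForm F V) : Set (V →ₗ[F] V) :=
  {φ | Function.Bijective φ ∧ (∀ x, Q (φ x) = Q x) ∧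
    ∀ x ∈ LinearMap.ker Q.polarBilin, φ x = x}

/-- The group `Δ(V,f) = {δ_{a*,f} : a* ∈ V*, ⟨a*,f⟩ ≠ -1}`. -/
def deltaSet (f : V) : Set (V →ₗ[F] V) :=
  {φ | ∃ a : Module.Dual F V, a f ≠ -1 ∧ φ = deltaMap a f}

/-- The `Q`-reflection `ξ_r : x ↦ x - Q(r)⁻¹ • B(r,x) • r` in the direction of `r`. -/
noncomputable def xiMap (Q : QuadraticForm F V) (r : V) : V →ₗ[F] V :=
  LinearMap.id - (Q r)⁻¹ • (Q.polarBilin r).smulRight r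

/-!
Writing `δ = δ_{a,f}`, one has `Q (δ x) - Q x = a x * (B(f,x) + a x * Q f)`, so `δ` is an
isometry iff at every `x` the functional `a` vanishes or agrees with
`b := -(Q f)⁻¹ • B(f,·)`. A linear map that pointwise agrees with one of two linear maps
agrees with one of them globally, so `a = 0` or `a = b`, i.e. `δ = id` or `δ = δ_{b,f} = ξ_f`.
Conversely `ξ_f` is an isometry, is involutive because `b f = -2`, and fixes the radical
because `b` vanishes there.
-/

open QuadraticMap

theorem LinearMap.eq_zero_or_eq_of_forall_eq_zero_or_eq {R M N : Type*} [Semiring R]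
    [AddCommMonoid M] [AddCommGroup N] [Module R M] [Module R N] {a b : M →ₗ[R] N}
    (h : ∀ x, a x = 0 ∨ a x = b x) : a = 0 ∨ a = b := by
  by_contra! hab
  obtain ⟨x, hx⟩ : ∃ x, a x ≠ 0 := by
    by_contra! hx
    exact hab.1 (LinearMap.ext hx)
  obtain ⟨y, hy⟩ : ∃ y, a y ≠ b y := by
    by_contra! hy
    exact hab.2 (LinearMap.ext hy)
  have hxb : a x = b x := (h x).resolve_left hx
  have hy0 : a y = 0 := (h y).resolve_right hy
  rcases h (x + y) with hxy | hxy
  · simp only [map_add, hy0, add_zero] at hxy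
    exact hx hxy
  · simp only [map_add, hy0, add_zero, hxb, left_eq_add] at hxy
    exact hy (hy0.trans hxy.symm)

section

omit [FiniteDimensional F V]

variable (Q : QuadraticForm F V) {f : V}

@[simp]
theorem deltaMap_apply (c : Module.Dual F V) (f x : V) : deltaMap c f x = x + c x • f := rfl

@[simp]
theorem deltaMap_zero (f : V) : deltaMap (0 : Module.Dual F V) f = LinearMap.id := by
  ext x
  simp

theorem deltaMap_eq_id_iff {c : Module.Dual F V} :
    deltaMap c f = LinearMap.id ↔ c = 0 ∨ f = 0 := by
  rw [deltaMap, add_eq_left, LinearMap.smulRight_apply_eq_zero_iff]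

theorem deltaMap_involutive {c : Module.Dual F V} (hc : c f = -2) :
    Function.Involutive (deltaMap c f) := by
  intro x
  simp only [deltaMap_apply, map_add, map_smul, hc]
  module

theorem apply_deltaMap (c : Module.Dual F V) (f x : V) :
    Q (deltaMap c f x) = Q x + c x * (polar Q f x + c x * Q f) := by
  rw [deltaMap_apply, QuadraticMap.map_add Q, QuadraticMap.map_smul, polar_smul_right, polar_comm]
  simp only [smul_eq_mul]
  ring

noncomputable def xiFunctional (f : V) : Module.Dual F V :=
  -(Q f)⁻¹ • Q.polarBilin f

@[simp]
theorem xiFunctional_apply (f x : V) : xiFunctional Q f x = -(Q f)⁻¹ * polar Q f x := by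
  simp [xiFunctional, polarBilin_apply_apply]

theorem xiFunctional_self (hQf : Q f ≠ 0) : xiFunctional Q f f = -2 := by
  rw [xiFunctional_apply, polar_self, two_smul]
  field_simp
  ring

theorem xiFunctional_apply_of_mem_ker {x : V} (hx : x ∈ LinearMap.ker Q.polarBilin) :
    xiFunctional Q f x = 0 := by
  rw [LinearMap.mem_ker] at hx
  rw [xiFunctional_apply, polar_comm, ← polarBilin_apply_apply, hx, LinearMap.zero_apply,
    mul_zero]

theorem xiMap_eq_deltaMap (f : V) : xiMap Q f = deltaMap (xiFunctional Q f) f := by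
  ext x
  simp only [xiMap, deltaMap_apply, xiFunctional_apply, LinearMap.sub_apply, LinearMap.id_apply,
    LinearMap.smul_apply, LinearMap.smulRight_apply, polarBilin_apply_apply, smul_smul]
  module

theorem isometry_deltaMap_iff (hQf : Q f ≠ 0) {a : Module.Dual F V} :
    (∀ x, Q (deltaMap a f x) = Q x) ↔ a = 0 ∨ a = xiFunctional Q f := by
  have hdefect : ∀ x, Q (deltaMap a f x) - Q x = Q f * (a x * (a x - xiFunctional Q f x)) := by
    intro x
    rw [apply_deltaMap, xiFunctional_apply]
    field_simp
    ring
  constructor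
  · intro h
    refine LinearMap.eq_zero_or_eq_of_forall_eq_zero_or_eq fun x => ?_
    have := hdefect x
    rw [h, sub_self, eq_comm, mul_eq_zero, mul_eq_zero, sub_eq_zero] at this
    exact this.resolve_left hQf
  · rintro (rfl | rfl) x
    · simp
    · simpa [sub_eq_zero] using hdefect x

theorem xiMap_ne_id (hQf : Q f ≠ 0) (hfrad : f ∉ LinearMap.ker Q.polarBilin) :
    xiMap Q f ≠ LinearMap.id := by
  rw [xiMap_eq_deltaMap, Ne, deltaMap_eq_id_iff, xiFunctional, smul_eq_zero, neg_eq_zero,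
    inv_eq_zero, ← LinearMap.mem_ker]
  rintro ((h | h) | rfl)
  exacts [hQf h, hfrad h, hfrad (Submodule.zero_mem _)]

theorem xiMap_mem_deltaSet (hQf : Q f ≠ 0) : xiMap Q f ∈ deltaSet f := by
  refine ⟨xiFunctional Q f, ?_, xiMap_eq_deltaMap Q f⟩
  rw [xiFunctional_self Q hQf]
  exact fun h => one_ne_zero (by linear_combination -h : (1 : F) = 0)

theorem xiMap_mem_wOrthSet (hQf : Q f ≠ 0) : xiMap Q f ∈ wOrthSet Q := by
  rw [xiMap_eq_deltaMap]
  refine ⟨(deltaMap_involutive (xiFunctional_self Q hQf)).bijective,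
    (isometry_deltaMap_iff Q hQf).2 (Or.inr rfl), fun x hx => ?_⟩
  simp [xiFunctional_apply_of_mem_ker Q hx]

theorem id_mem_deltaSet (f : V) : (LinearMap.id : V →ₗ[F] V) ∈ deltaSet f :=
  ⟨0, by simp, (deltaMap_zero f).symm⟩

theorem id_mem_wOrthSet : (LinearMap.id : V →ₗ[F] V) ∈ wOrthSet Q :=
  ⟨Function.bijective_id, fun _ => rfl, fun _ _ => rfl⟩

theorem wOrthSet_subset_orthSet : wOrthSet Q ⊆ orthSet Q :=
  fun _ hφ => ⟨hφ.1, hφ.2.1⟩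

theorem deltaSet_inter_orthSet_subset (hQf : Q f ≠ 0) :
    deltaSet f ∩ orthSet Q ⊆ {LinearMap.id, xiMap Q f} := by
  rintro _ ⟨⟨a, -, rfl⟩, -, hiso⟩
  rcases (isometry_deltaMap_iff Q hQf).1 hiso with rfl | rfl
  · exact Or.inl (deltaMap_zero f)
  · exact Or.inr (xiMap_eq_deltaMap Q f).symm

end

theorem stmt0 (Q : QuadraticForm F V) (f : V)
    (hfrad : f ∉ LinearMap.ker Q.polarBilin) (hQf : Q f ≠ 0) :
    deltaSet f ∩ orthSet Q = ({LinearMap.id, xiMap Q f} : Set (V →ₗ[F] V)) ∧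
    deltaSet f ∩ wOrthSet Q = ({LinearMap.id, xiMap Q f} : Set (V →ₗ[F] V)) ∧
    xiMap Q f ≠ LinearMap.id := by
  have hO := deltaSet_inter_orthSet_subset Q hQf
  have hO' : deltaSet f ∩ wOrthSet Q ⊆ deltaSet f ∩ orthSet Q :=
    Set.inter_subset_inter_right _ (wOrthSet_subset_orthSet Q)
  have hpair : {LinearMap.id, xiMap Q f} ⊆ deltaSet f ∩ wOrthSet Q := by
    rintro _ (rfl | rfl)
    exacts [⟨id_mem_deltaSet f, id_mem_wOrthSet Q⟩,
      ⟨xiMap_mem_deltaSet Q hQf, xiMap_mem_wOrthSet Q hQf⟩]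
  exact ⟨hO.antisymm (hpair.trans hO'), (hO'.trans hO).antisymm hpair, xiMap_ne_id Q hQf hfrad⟩
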